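/- The symmetry rule Symm is admissible in G3c^=⁻: for all terms s, r and finite multisets Γ, Δ of formulas, if the sequent s = r, Γ ⇒ Δ is derivable in G3c^=⁻, then the sequent r = s, Γ ⇒ Δ is derivable in G3c^=⁻. -/

import Mathlib

open FirstOrder Language Multiset

universe u v

variable {L : FirstOrder.Language.{u, v}}

/-- Number of occurrences of the variable `v` in a term. -/
def tCount (v : ℕ) : L.Term ℕ → ℕ
  | .var w => if w = v then 1 else 0
  | .func _ ts => Finset.univ.sum fun i => tCount v (ts i)

/-- First-order formulas over the language `L` (with built-in equality),
with natural numbers as variables. -/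
inductive Fm (L : FirstOrder.Language.{u, v}) : Type (max u v) where
  | falsum : Fm L
  | equal : L.Term ℕ → L.Term ℕ → Fm L
  | rel {l : ℕ} : L.Relations l → (Fin l → L.Term ℕ) → Fm L
  | and : Fm L → Fm L → Fm L
  | or : Fm L → Fm L → Fm L
  | imp : Fm L → Fm L → Fm L
  | all : ℕ → Fm L → Fm L
  | ex : ℕ → Fm L → Fm L

namespace Fm

/-- Atomic formulas: equalities and relational atoms. -/
inductive IsAtomic : Fm L → Prop where
  | equal (t₁ t₂ : L.Term ℕ) : (Fm.equal t₁ t₂).IsAtomic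
  | rel {l : ℕ} (R : L.Relations l) (ts : Fin l → L.Term ℕ) : (Fm.rel R ts).IsAtomic

/-- Number of free occurrences of the variable `v` in a formula. -/
def fCount (v : ℕ) : Fm L → ℕ
  | falsum => 0
  | equal t₁ t₂ => tCount v t₁ + tCount v t₂
  | rel _ ts => Finset.univ.sum fun i => tCount v (ts i)
  | and A B => fCount v A + fCount v B
  | or A B => fCount v A + fCount v B
  | imp A B => fCount v A + fCount v B
  | all y A => if y = v then 0 else fCount v A
  | ex y A => if y = v then 0 else fCount v A

/-- The set of free variables of a formula. -/
def freeVars : Fm L → Set ℕ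
  | falsum => ∅
  | equal t₁ t₂ => {w | tCount w t₁ ≠ 0 ∨ tCount w t₂ ≠ 0}
  | rel _ ts => {w | ∃ i, tCount w (ts i) ≠ 0}
  | and A B => A.freeVars ∪ B.freeVars
  | or A B => A.freeVars ∪ B.freeVars
  | imp A B => A.freeVars ∪ B.freeVars
  | all y A => A.freeVars \ {y}
  | ex y A => A.freeVars \ {y}

/-- Simultaneous substitution of terms for the free variables of a formula. -/
def ssub (σ : ℕ → L.Term ℕ) : Fm L → Fm L
  | falsum => falsum
  | equal t₁ t₂ => equal (t₁.subst σ) (t₂.subst σ)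
  | rel R ts => rel R fun i => (ts i).subst σ
  | and A B => and (A.ssub σ) (B.ssub σ)
  | or A B => or (A.ssub σ) (B.ssub σ)
  | imp A B => imp (A.ssub σ) (B.ssub σ)
  | all y A => all y (A.ssub (Function.update σ y (Term.var y)))
  | ex y A => ex y (A.ssub (Function.update σ y (Term.var y)))

/-- `A.subst v t` is `A[v/t]`, the substitution of the term `t`
for the variable `v` in `A`. -/
def subst (v : ℕ) (t : L.Term ℕ) (A : Fm L) : Fm L :=
  A.ssub (Function.update (Term.var : ℕ → L.Term ℕ) v t)

/-- `t` is free for `x` in `A` (no free occurrence of `x` lies in the scope of a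
quantifier binding a variable of `t`). -/
def freeFor (t : L.Term ℕ) (x : ℕ) : Fm L → Prop
  | falsum => True
  | equal _ _ => True
  | rel _ _ => True
  | and A B => freeFor t x A ∧ freeFor t x B
  | or A B => freeFor t x A ∧ freeFor t x B
  | imp A B => freeFor t x A ∧ freeFor t x B
  | all y A => x = y ∨ x ∉ A.freeVars ∨ (tCount y t = 0 ∧ freeFor t x A)
  | ex y A => x = y ∨ x ∉ A.freeVars ∨ (tCount y t = 0 ∧ freeFor t x A)

end Fm

/-- The rule Repl, given as the relation between the antecedent of the premiss and the
antecedent of the conclusion (the succedent is unchanged): from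
`s = r, P[v/s], P[v/r], Γ ⇒ Δ` infer `s = r, P[v/s], Γ ⇒ Δ`, for `P` atomic and
`v` not occurring in `s, r`. -/
def ReplFull (L : FirstOrder.Language.{u, v}) : Multiset (Fm L) → Multiset (Fm L) → Prop := fun Γp Γc =>
  ∃ (s r : L.Term ℕ) (v : ℕ) (P : Fm L) (Γ : Multiset (Fm L)),
    P.IsAtomic ∧ tCount v s = 0 ∧ tCount v r = 0 ∧
    Γp = Fm.equal s r ::ₘ P.subst v s ::ₘ P.subst v r ::ₘ Γ ∧
    Γc = Fm.equal s r ::ₘ P.subst v s ::ₘ Γ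

/-- The rule Repl⁻: from `s = r, P[v/r], Γ ⇒ Δ` infer `s = r, P[v/s], Γ ⇒ Δ`,
for `P` atomic and `v` not occurring in `s, r`. -/
def ReplMinus (L : FirstOrder.Language.{u, v}) : Multiset (Fm L) → Multiset (Fm L) → Prop := fun Γp Γc =>
  ∃ (s r : L.Term ℕ) (v : ℕ) (P : Fm L) (Γ : Multiset (Fm L)),
    P.IsAtomic ∧ tCount v s = 0 ∧ tCount v r = 0 ∧
    Γp = Fm.equal s r ::ₘ P.subst v r ::ₘ Γ ∧
    Γc = Fm.equal s r ::ₘ P.subst v s ::ₘ Γ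

/-- The rule Repl₁⁻: Repl⁻ restricted to atomic `P` with exactly one occurrence of `v`. -/
def ReplMinus1 (L : FirstOrder.Language.{u, v}) : Multiset (Fm L) → Multiset (Fm L) → Prop := fun Γp Γc =>
  ∃ (s r : L.Term ℕ) (v : ℕ) (P : Fm L) (Γ : Multiset (Fm L)),
    P.IsAtomic ∧ tCount v s = 0 ∧ tCount v r = 0 ∧ Fm.fCount v P = 1 ∧
    Γp = Fm.equal s r ::ₘ P.subst v r ::ₘ Γ ∧
    Γc = Fm.equal s r ::ₘ P.subst v s ::ₘ Γ

/-- `DerC rp n Γ Δ`: the sequent `Γ ⇒ Δ` has a derivation of height at most `n` in the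
classical multisuccedent G3 calculus `G3c` with the equality rule Ref and the
replacement rule given by `rp` (e.g. `ReplFull L` for `G3c^=`, `ReplMinus L` for `G3c^=⁻`,
`ReplMinus1 L` for `G3c₁^=⁻`). -/
inductive DerC (rp : Multiset (Fm L) → Multiset (Fm L) → Prop) :
    ℕ → Multiset (Fm L) → Multiset (Fm L) → Prop where
  | ax {n : ℕ} {Γ Δ : Multiset (Fm L)} {P : Fm L} (hP : P.IsAtomic) :
      DerC rp n (P ::ₘ Γ) (P ::ₘ Δ)
  | botL {n : ℕ} {Γ Δ : Multiset (Fm L)} : DerC rp n (Fm.falsum ::ₘ Γ) Δ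
  | andL {n : ℕ} {Γ Δ : Multiset (Fm L)} {A B : Fm L} :
      DerC rp n (A ::ₘ B ::ₘ Γ) Δ → DerC rp (n + 1) (Fm.and A B ::ₘ Γ) Δ
  | andR {n : ℕ} {Γ Δ : Multiset (Fm L)} {A B : Fm L} :
      DerC rp n Γ (A ::ₘ Δ) → DerC rp n Γ (B ::ₘ Δ) → DerC rp (n + 1) Γ (Fm.and A B ::ₘ Δ)
  | orL {n : ℕ} {Γ Δ : Multiset (Fm L)} {A B : Fm L} :
      DerC rp n (A ::ₘ Γ) Δ → DerC rp n (B ::ₘ Γ) Δ → DerC rp (n + 1) (Fm.or A B ::ₘ Γ) Δ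
  | orR {n : ℕ} {Γ Δ : Multiset (Fm L)} {A B : Fm L} :
      DerC rp n Γ (A ::ₘ B ::ₘ Δ) → DerC rp (n + 1) Γ (Fm.or A B ::ₘ Δ)
  | impL {n : ℕ} {Γ Δ : Multiset (Fm L)} {A B : Fm L} :
      DerC rp n Γ (A ::ₘ Δ) → DerC rp n (B ::ₘ Γ) Δ → DerC rp (n + 1) (Fm.imp A B ::ₘ Γ) Δ
  | impR {n : ℕ} {Γ Δ : Multiset (Fm L)} {A B : Fm L} :
      DerC rp n (A ::ₘ Γ) (B ::ₘ Δ) → DerC rp (n + 1) Γ (Fm.imp A B ::ₘ Δ)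
  | allL {n : ℕ} {Γ Δ : Multiset (Fm L)} {x : ℕ} {t : L.Term ℕ} {A : Fm L}
      (hf : Fm.freeFor t x A) :
      DerC rp n (A.subst x t ::ₘ Fm.all x A ::ₘ Γ) Δ → DerC rp (n + 1) (Fm.all x A ::ₘ Γ) Δ
  | allR {n : ℕ} {Γ Δ : Multiset (Fm L)} {x y : ℕ} {A : Fm L}
      (hf : Fm.freeFor (Term.var y) x A) (hy : y ∉ (Fm.all x A).freeVars)
      (hΓ : ∀ C ∈ Γ, y ∉ Fm.freeVars C) (hΔ : ∀ C ∈ Δ, y ∉ Fm.freeVars C) :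
      DerC rp n Γ (A.subst x (Term.var y) ::ₘ Δ) → DerC rp (n + 1) Γ (Fm.all x A ::ₘ Δ)
  | exL {n : ℕ} {Γ Δ : Multiset (Fm L)} {x y : ℕ} {A : Fm L}
      (hf : Fm.freeFor (Term.var y) x A) (hy : y ∉ (Fm.ex x A).freeVars)
      (hΓ : ∀ C ∈ Γ, y ∉ Fm.freeVars C) (hΔ : ∀ C ∈ Δ, y ∉ Fm.freeVars C) :
      DerC rp n (A.subst x (Term.var y) ::ₘ Γ) Δ → DerC rp (n + 1) (Fm.ex x A ::ₘ Γ) Δ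
  | exR {n : ℕ} {Γ Δ : Multiset (Fm L)} {x : ℕ} {t : L.Term ℕ} {A : Fm L}
      (hf : Fm.freeFor t x A) :
      DerC rp n Γ (A.subst x t ::ₘ Fm.ex x A ::ₘ Δ) → DerC rp (n + 1) Γ (Fm.ex x A ::ₘ Δ)
  | ref {n : ℕ} {Γ Δ : Multiset (Fm L)} (t : L.Term ℕ) :
      DerC rp n (Fm.equal t t ::ₘ Γ) Δ → DerC rp (n + 1) Γ Δ
  | repl {n : ℕ} {Γp Γc Δ : Multiset (Fm L)} (h : rp Γp Γc) :
      DerC rp n Γp Δ → DerC rp (n + 1) Γc Δ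

/-- `DerI rp n Γ Δ`: the sequent `Γ ⇒ Δ` has a derivation of height at most `n` in the
intuitionistic multisuccedent G3 calculus (the right rules for `→` and `∀` have
single-succedent premisses, and L→ repeats its principal formula) with the equality rule
Ref and the replacement rule given by `rp`. -/
inductive DerI (rp : Multiset (Fm L) → Multiset (Fm L) → Prop) :
    ℕ → Multiset (Fm L) → Multiset (Fm L) → Prop where
  | ax {n : ℕ} {Γ Δ : Multiset (Fm L)} {P : Fm L} (hP : P.IsAtomic) :
      DerI rp n (P ::ₘ Γ) (P ::ₘ Δ)
  | botL {n : ℕ} {Γ Δ : Multiset (Fm L)} : DerI rp n (Fm.falsum ::ₘ Γ) Δ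
  | andL {n : ℕ} {Γ Δ : Multiset (Fm L)} {A B : Fm L} :
      DerI rp n (A ::ₘ B ::ₘ Γ) Δ → DerI rp (n + 1) (Fm.and A B ::ₘ Γ) Δ
  | andR {n : ℕ} {Γ Δ : Multiset (Fm L)} {A B : Fm L} :
      DerI rp n Γ (A ::ₘ Δ) → DerI rp n Γ (B ::ₘ Δ) → DerI rp (n + 1) Γ (Fm.and A B ::ₘ Δ)
  | orL {n : ℕ} {Γ Δ : Multiset (Fm L)} {A B : Fm L} :
      DerI rp n (A ::ₘ Γ) Δ → DerI rp n (B ::ₘ Γ) Δ → DerI rp (n + 1) (Fm.or A B ::ₘ Γ) Δ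
  | orR {n : ℕ} {Γ Δ : Multiset (Fm L)} {A B : Fm L} :
      DerI rp n Γ (A ::ₘ B ::ₘ Δ) → DerI rp (n + 1) Γ (Fm.or A B ::ₘ Δ)
  | impL {n : ℕ} {Γ Δ : Multiset (Fm L)} {A B : Fm L} :
      DerI rp n (Fm.imp A B ::ₘ Γ) (A ::ₘ Δ) → DerI rp n (B ::ₘ Γ) Δ →
      DerI rp (n + 1) (Fm.imp A B ::ₘ Γ) Δ
  | impR {n : ℕ} {Γ Δ : Multiset (Fm L)} {A B : Fm L} :
      DerI rp n (A ::ₘ Γ) {B} → DerI rp (n + 1) Γ (Fm.imp A B ::ₘ Δ)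
  | allL {n : ℕ} {Γ Δ : Multiset (Fm L)} {x : ℕ} {t : L.Term ℕ} {A : Fm L}
      (hf : Fm.freeFor t x A) :
      DerI rp n (A.subst x t ::ₘ Fm.all x A ::ₘ Γ) Δ → DerI rp (n + 1) (Fm.all x A ::ₘ Γ) Δ
  | allR {n : ℕ} {Γ Δ : Multiset (Fm L)} {x y : ℕ} {A : Fm L}
      (hf : Fm.freeFor (Term.var y) x A) (hy : y ∉ (Fm.all x A).freeVars)
      (hΓ : ∀ C ∈ Γ, y ∉ Fm.freeVars C) :
      DerI rp n Γ {A.subst x (Term.var y)} → DerI rp (n + 1) Γ (Fm.all x A ::ₘ Δ)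
  | exL {n : ℕ} {Γ Δ : Multiset (Fm L)} {x y : ℕ} {A : Fm L}
      (hf : Fm.freeFor (Term.var y) x A) (hy : y ∉ (Fm.ex x A).freeVars)
      (hΓ : ∀ C ∈ Γ, y ∉ Fm.freeVars C) (hΔ : ∀ C ∈ Δ, y ∉ Fm.freeVars C) :
      DerI rp n (A.subst x (Term.var y) ::ₘ Γ) Δ → DerI rp (n + 1) (Fm.ex x A ::ₘ Γ) Δ
  | exR {n : ℕ} {Γ Δ : Multiset (Fm L)} {x : ℕ} {t : L.Term ℕ} {A : Fm L}
      (hf : Fm.freeFor t x A) :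
      DerI rp n Γ (A.subst x t ::ₘ Fm.ex x A ::ₘ Δ) → DerI rp (n + 1) Γ (Fm.ex x A ::ₘ Δ)
  | ref {n : ℕ} {Γ Δ : Multiset (Fm L)} (t : L.Term ℕ) :
      DerI rp n (Fm.equal t t ::ₘ Γ) Δ → DerI rp (n + 1) Γ Δ
  | repl {n : ℕ} {Γp Γc Δ : Multiset (Fm L)} (h : rp Γp Γc) :
      DerI rp n Γp Δ → DerI rp (n + 1) Γc Δ


/-!
Repl⁻ applied to the atom `w = r`, with `w` fresh, rewrites `s = r` into `r = r` in the presence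
of `r = s`, and Ref removes `r = r`; so `r = s, Γ ⇒ Δ` follows from `r = s, s = r, Γ ⇒ Δ`.
That sequent is a weakening of `s = r, Γ ⇒ Δ`, and weakening by a formula is height-preserving
admissible as long as its free variables occur in atoms of the antecedent: reading a derivation
upwards, atoms only disappear through Repl⁻, which trades `P[v/s]` for `P[v/r]` while keeping
`s = r`, so their free variables persist and no eigenvariable condition can be violated.
-/

theorem eventually_tCount_eq_zero (t : L.Term ℕ) : ∀ᶠ w in Filter.atTop, tCount w t = 0 := by
  induction t with
  | var x =>
    filter_upwards [Filter.eventually_gt_atTop x] with w hw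
    simp [tCount, hw.ne]
  | func f ts ih =>
    filter_upwards [Filter.eventually_all.2 ih] with w hw
    exact Finset.sum_eq_zero fun i _ => hw i

theorem subst_update_of_tCount_eq_zero {w : ℕ} (u : L.Term ℕ) {t : L.Term ℕ}
    (h : tCount w t = 0) : t.subst (Function.update Term.var w u) = t := by
  induction t with
  | var x =>
    have hxw : x ≠ w := by rintro rfl; simp [tCount] at h
    simp [Term.subst, Function.update_of_ne hxw]
  | func f ts ih =>
    simp only [tCount, Finset.sum_eq_zero_iff, Finset.mem_univ, forall_const] at h
    simp only [Term.subst, fun i => ih i (h i)]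

theorem tCount_subst_update_ne_zero {w v : ℕ} {s : L.Term ℕ} (r : L.Term ℕ) {t : L.Term ℕ}
    (h : tCount w (t.subst (Function.update Term.var v s)) ≠ 0) :
    tCount w s ≠ 0 ∨ tCount w (t.subst (Function.update Term.var v r)) ≠ 0 := by
  induction t with
  | var x =>
    by_cases hx : x = v
    · subst hx
      exact .inl (by simpa [Term.subst] using h)
    · exact .inr (by simpa [Term.subst, Function.update_of_ne hx] using h)
  | func f ts ih =>
    simp only [Term.subst, tCount] at h ⊢
    obtain ⟨i, -, hi⟩ := Finset.exists_ne_zero_of_sum_ne_zero h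
    refine (ih i hi).imp_right fun hr hsum => hr ?_
    exact Finset.sum_eq_zero_iff.1 hsum i (Finset.mem_univ i)

theorem Fm.IsAtomic.subst {P : Fm L} (hP : P.IsAtomic) (v : ℕ) (t : L.Term ℕ) :
    (P.subst v t).IsAtomic := by
  cases hP with
  | equal => exact .equal _ _
  | rel => exact .rel _ _

theorem Fm.IsAtomic.freeVars_subst_subset {P : Fm L} (hP : P.IsAtomic) (v : ℕ)
    (s r : L.Term ℕ) :
    (P.subst v s).freeVars ⊆ (Fm.equal s r).freeVars ∪ (P.subst v r).freeVars := by
  cases hP with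
  | equal t₁ t₂ =>
    simp only [Fm.subst, Fm.ssub, Fm.freeVars]
    rintro w (h | h) <;> rcases tCount_subst_update_ne_zero r h with h' | h' <;>
      simp [h']
  | rel R ts =>
    rintro w ⟨i, h⟩
    rcases tCount_subst_update_ne_zero r h with h' | h'
    · exact .inl (.inl h')
    · exact .inr ⟨i, h'⟩

def atomVars (Γ : Multiset (Fm L)) : Set ℕ :=
  {w | ∃ C ∈ Γ, C.IsAtomic ∧ w ∈ C.freeVars}

theorem atomVars_mono {Γ Γ' : Multiset (Fm L)} (h : Γ ≤ Γ') : atomVars Γ ⊆ atomVars Γ' :=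
  fun _ ⟨C, hC, hat, hw⟩ => ⟨C, Multiset.subset_of_le h hC, hat, hw⟩

theorem atomVars_cons_subset {A : Fm L} {Γ Γ' : Multiset (Fm L)} (hA : ¬A.IsAtomic)
    (h : Γ ≤ Γ') : atomVars (A ::ₘ Γ) ⊆ atomVars Γ' := by
  rintro w ⟨C, hC, hat, hw⟩
  rcases mem_cons.1 hC with rfl | hC
  · exact absurd hat hA
  · exact ⟨C, Multiset.subset_of_le h hC, hat, hw⟩

theorem atomVars_subset_of_replMinus {Γp Γc : Multiset (Fm L)} (h : ReplMinus L Γp Γc) :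
    atomVars Γc ⊆ atomVars Γp := by
  obtain ⟨s, r, v, P, Γ, hP, -, -, rfl, rfl⟩ := h
  rintro w ⟨C, hC, hat, hw⟩
  rcases mem_cons.1 hC with rfl | hC
  · exact ⟨_, mem_cons_self _ _, hat, hw⟩
  rcases mem_cons.1 hC with rfl | hC
  · rcases hP.freeVars_subst_subset v s r hw with hw | hw
    · exact ⟨_, mem_cons_self _ _, .equal s r, hw⟩
    · exact ⟨_, mem_cons_of_mem (mem_cons_self _ _), hP.subst v r, hw⟩
  · exact ⟨C, mem_cons_of_mem (mem_cons_of_mem hC), hat, hw⟩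

theorem notMem_freeVars_cons {y : ℕ} {B : Fm L} {Γ : Multiset (Fm L)}
    (hB : B.freeVars ⊆ atomVars Γ) (hΓ : ∀ C ∈ Γ, y ∉ C.freeVars) :
    ∀ C ∈ B ::ₘ Γ, y ∉ C.freeVars := by
  intro C hC
  rcases mem_cons.1 hC with rfl | hC
  · intro hy
    obtain ⟨D, hD, -, hyD⟩ := hB hy
    exact hΓ D hD hyD
  · exact hΓ C hC

theorem DerC.weaken {n : ℕ} {Γ Δ : Multiset (Fm L)} (h : DerC (ReplMinus L) n Γ Δ) {B : Fm L}
    (hB : B.freeVars ⊆ atomVars Γ) : DerC (ReplMinus L) n (B ::ₘ Γ) Δ := by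
  induction h generalizing B with
  | ax hP => rw [cons_swap]; exact .ax hP
  | botL => rw [cons_swap]; exact .botL
  | andL _ ih =>
    have d := ih (hB.trans (atomVars_cons_subset (by rintro ⟨⟩)
      ((le_cons_self _ _).trans (le_cons_self _ _))))
    rw [cons_swap B, cons_swap B] at d
    rw [cons_swap]; exact .andL d
  | andR _ _ ih₁ ih₂ => exact .andR (ih₁ hB) (ih₂ hB)
  | orL _ _ ih₁ ih₂ =>
    have d₁ := ih₁ (hB.trans (atomVars_cons_subset (by rintro ⟨⟩) (le_cons_self _ _)))
    have d₂ := ih₂ (hB.trans (atomVars_cons_subset (by rintro ⟨⟩) (le_cons_self _ _)))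
    rw [cons_swap B] at d₁ d₂
    rw [cons_swap]; exact .orL d₁ d₂
  | orR _ ih => exact .orR (ih hB)
  | impL _ _ ih₁ ih₂ =>
    have d₁ := ih₁ (hB.trans (atomVars_cons_subset (by rintro ⟨⟩) le_rfl))
    have d₂ := ih₂ (hB.trans (atomVars_cons_subset (by rintro ⟨⟩) (le_cons_self _ _)))
    rw [cons_swap B] at d₂
    rw [cons_swap]; exact .impL d₁ d₂
  | impR _ ih =>
    have d := ih (hB.trans (atomVars_mono (le_cons_self _ _)))
    rw [cons_swap] at d
    exact .impR d
  | allL hf _ ih =>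
    have d := ih (hB.trans (atomVars_cons_subset (by rintro ⟨⟩)
      ((le_cons_self _ _).trans (le_cons_self _ _))))
    rw [cons_swap B, cons_swap B] at d
    rw [cons_swap]; exact .allL hf d
  | allR hf hy hΓ hΔ _ ih => exact .allR hf hy (notMem_freeVars_cons hB hΓ) hΔ (ih hB)
  | exL hf hy hΓ hΔ _ ih =>
    have hB' := hB.trans (atomVars_cons_subset (by rintro ⟨⟩) le_rfl)
    have d := ih (hB'.trans (atomVars_mono (le_cons_self _ _)))
    rw [cons_swap B] at d
    rw [cons_swap]; exact .exL hf hy (notMem_freeVars_cons hB' hΓ) hΔ d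
  | exR hf _ ih => exact .exR hf (ih hB)
  | ref t _ ih =>
    have d := ih (hB.trans (atomVars_mono (le_cons_self _ _)))
    rw [cons_swap] at d
    exact .ref t d
  | repl hrep _ ih =>
    have d := ih (hB.trans (atomVars_subset_of_replMinus hrep))
    obtain ⟨s, r, v, P, Γ, hP, hvs, hvr, rfl, rfl⟩ := hrep
    rw [cons_swap B, cons_swap B] at d
    rw [cons_swap B, cons_swap B]
    exact .repl ⟨s, r, v, P, B ::ₘ Γ, hP, hvs, hvr, rfl, rfl⟩ d

theorem DerC.of_cons_symm {n : ℕ} {s r : L.Term ℕ} {Γ Δ : Multiset (Fm L)}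
    (h : DerC (ReplMinus L) n (Fm.equal r s ::ₘ Fm.equal s r ::ₘ Γ) Δ) :
    DerC (ReplMinus L) (n + 2) (Fm.equal r s ::ₘ Γ) Δ := by
  obtain ⟨w, hws, hwr⟩ :=
    ((eventually_tCount_eq_zero s).and (eventually_tCount_eq_zero r)).exists
  have hrep : ReplMinus L (Fm.equal r s ::ₘ Fm.equal s r ::ₘ Γ)
      (Fm.equal r s ::ₘ Fm.equal r r ::ₘ Γ) :=
    ⟨r, s, w, Fm.equal (Term.var w) r, Γ, .equal _ _, hwr, hws,
      by simp [Fm.subst, Fm.ssub, Term.subst, subst_update_of_tCount_eq_zero _ hwr],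
      by simp [Fm.subst, Fm.ssub, Term.subst, subst_update_of_tCount_eq_zero _ hwr]⟩
  have d := DerC.repl hrep h
  rw [cons_swap] at d
  exact .ref r d

/-- The symmetry rule Symm is admissible in `G3c^=⁻`: if `s = r, Γ ⇒ Δ` is derivable,
then so is `r = s, Γ ⇒ Δ`. -/
theorem symm_admissible_G3cEqMinus (L : FirstOrder.Language.{u, v})
    (s r : L.Term ℕ) (Γ Δ : Multiset (Fm L))
    (hd : ∃ n, DerC (ReplMinus L) n (Fm.equal s r ::ₘ Γ) Δ) :
    ∃ n, DerC (ReplMinus L) n (Fm.equal r s ::ₘ Γ) Δ := by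
  obtain ⟨n, hd⟩ := hd
  have hflip : (Fm.equal r s).freeVars ⊆ atomVars (Fm.equal s r ::ₘ Γ) := fun _ hw =>
    ⟨_, mem_cons_self _ _, .equal s r,
      by simpa only [Fm.freeVars, Set.mem_ofPred_eq, or_comm] using hw⟩
  exact ⟨n + 2, (hd.weaken hflip).of_cons_symm⟩
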